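/- Let s ∈ ℝ and let n, k ∈ ℤ with n > k. Then for every x with 0 < x < 1, the following contiguous relation of hypergeometric series holds: (x·(k + n) + s − n)·F(s − k, s + n; 1 − k + n; x) − (1 − x)·(s − k)·F(s − k + 1, s + n; 1 − k + n; x) = −(n − k)·F(s − k − 1, s + n; n − k; x). -/

import Mathlib

/-! Write `F(a, b; c; x) = Σ tₘ xᵐ`. Multiplying by `x` and removing the constant term `t₀ = 1`
expresses both sides of the contiguous relation as series in `xᵐ⁺¹`, so it suffices to compare
coefficients. These all reduce to `tₘ` through `tₘ₊₁ = tₘ (a+m)(b+m) / ((c+m)(m+1))`,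
`a tₘ(a+1) = (a+m) tₘ` and `tₘ₊₁(a-1; c-1) = tₘ (a-1)(b+m) / ((c-1)(m+1))`, after which
the comparison is an identity of rational functions of `m`. Convergence for `|x| < 1` is the
ratio test. The theorem is the case `a = s - k`, `b = s + n`, `c = 1 - k + n`. -/

open Filter Topology
open scoped Nat

/-- The Gauss hypergeometric series `F(a, b; c; x) = Σ (a)_m (b)_m / ((c)_m m!) x^m`. -/
noncomputable def hyperF (a b c x : ℝ) : ℝ :=
  ∑' m : ℕ, ((ascPochhammer ℝ m).eval a * (ascPochhammer ℝ m).eval b /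
    ((ascPochhammer ℝ m).eval c * (Nat.factorial m))) * x ^ m

/-- The sign `ε = 1` if `n ≥ k`, `ε = −1` otherwise. -/
noncomputable def eps (n k : ℤ) : ℝ := if k ≤ n then 1 else -1

/-- `Φ_{2n,2k}(r) = (1 − r²)^s r^{|n−k|} F(s − εk, s + εn; 1 + |n−k|; r²)`. -/
noncomputable def Phi (s : ℝ) (n k : ℤ) (r : ℝ) : ℝ :=
  (1 - r ^ 2) ^ s * r ^ (n - k).natAbs *
    hyperF (s - eps n k * k) (s + eps n k * n) (1 + (n - k).natAbs) (r ^ 2)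

noncomputable def hyperCoeff (a b c : ℝ) (m : ℕ) : ℝ :=
  (ascPochhammer ℝ m).eval a * (ascPochhammer ℝ m).eval b /
    ((ascPochhammer ℝ m).eval c * m !)

@[simp]
lemma hyperCoeff_zero (a b c : ℝ) : hyperCoeff a b c 0 = 1 := by
  simp [hyperCoeff]

lemma ascPochhammer_eval_succ_left {S : Type*} [CommSemiring S] (a : S) (m : ℕ) :
    (ascPochhammer S (m + 1)).eval a = a * (ascPochhammer S m).eval (a + 1) := by
  simp [ascPochhammer_succ_left, Polynomial.eval_comp]

-- No hypothesis on `c`: if `(c)ₘ₊₁ = 0`, both sides are `0` because `x / 0 = 0`.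
lemma hyperCoeff_succ (a b c : ℝ) (m : ℕ) :
    hyperCoeff a b c (m + 1) =
      hyperCoeff a b c m * ((a + m) * (b + m) / ((c + m) * (m + 1))) := by
  rw [hyperCoeff, hyperCoeff, div_mul_div_comm, ascPochhammer_succ_eval,
    ascPochhammer_succ_eval, ascPochhammer_succ_eval, Nat.factorial_succ]
  push_cast
  congr 1 <;> ring

lemma mul_hyperCoeff_add_one (a b c : ℝ) (m : ℕ) :
    a * hyperCoeff (a + 1) b c m = (a + m) * hyperCoeff a b c m := by
  rw [hyperCoeff, hyperCoeff, ← mul_div_assoc, ← mul_div_assoc, ← mul_assoc,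
    ← ascPochhammer_eval_succ_left, ascPochhammer_succ_eval]
  ring

lemma hyperCoeff_sub_one_sub_one_succ (a b c : ℝ) (m : ℕ) :
    hyperCoeff (a - 1) b (c - 1) (m + 1) =
      hyperCoeff a b c m * ((a - 1) * (b + m) / ((c - 1) * (m + 1))) := by
  rw [hyperCoeff, hyperCoeff, div_mul_div_comm, ascPochhammer_eval_succ_left (a - 1),
    ascPochhammer_eval_succ_left (c - 1), ascPochhammer_succ_eval m b, Nat.factorial_succ,
    sub_add_cancel, sub_add_cancel]
  push_cast
  congr 1 <;> ring

lemma tendsto_add_div_add_atTop (a c : ℝ) :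
    Tendsto (fun m : ℕ => (a + m) / (c + m)) atTop (𝓝 1) := by
  have hcm : Tendsto (fun m : ℕ => c + (m : ℝ)) atTop atTop :=
    tendsto_atTop_add_const_left _ c tendsto_natCast_atTop_atTop
  have h := (hcm.const_div_atTop (a - c)).const_add 1
  rw [add_zero] at h
  refine h.congr' ?_
  filter_upwards [hcm.eventually_ne_atTop 0] with m hm
  field_simp
  ring

lemma summable_hyperCoeff_mul_pow (a b c : ℝ) {x : ℝ} (hx : |x| < 1) :
    Summable fun m => hyperCoeff a b c m * x ^ m := by
  obtain ⟨r, hxr, hr1⟩ := exists_between hx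
  have hratio : Tendsto (fun m : ℕ => |(a + m) * (b + m) / ((c + m) * (m + 1))| * |x|)
      atTop (𝓝 |x|) := by
    have h := (((tendsto_add_div_add_atTop a c).mul
      (tendsto_add_div_add_atTop b 1)).abs.mul_const |x|)
    simp only [mul_one, abs_one, one_mul] at h
    refine h.congr fun m => ?_
    rw [div_mul_div_comm, add_comm 1 (m : ℝ)]
  refine summable_of_ratio_norm_eventually_le hr1 ?_
  filter_upwards [hratio.eventually_le_const hxr] with m hm
  rw [hyperCoeff_succ, pow_succ, Real.norm_eq_abs, Real.norm_eq_abs]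
  calc _ = (|(a + m) * (b + m) / ((c + m) * (m + 1))| * |x|) * |hyperCoeff a b c m * x ^ m| := by
        rw [abs_mul, abs_mul, abs_mul, abs_mul]; ring
    _ ≤ r * |hyperCoeff a b c m * x ^ m| := by gcongr

section HasSum

variable (a b c : ℝ) {x : ℝ} (hx : |x| < 1)
include hx

lemma hasSum_hyperF : HasSum (fun m => hyperCoeff a b c m * x ^ m) (hyperF a b c x) :=
  (summable_hyperCoeff_mul_pow a b c hx).hasSum

lemma hasSum_hyperCoeff_mul_pow_succ :
    HasSum (fun m => hyperCoeff a b c m * x ^ (m + 1)) (x * hyperF a b c x) :=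
  ((hasSum_hyperF a b c hx).mul_left x).congr_fun fun m => by ring

lemma hasSum_hyperCoeff_succ_mul_pow_succ :
    HasSum (fun m => hyperCoeff a b c (m + 1) * x ^ (m + 1)) (hyperF a b c x - 1) := by
  simpa using (hasSum_nat_add_iff' 1).mpr (hasSum_hyperF a b c hx)

end HasSum

lemma hyperCoeff_contiguous (a b c : ℝ) (hc : 1 < c) (m : ℕ) :
    (b - a) * hyperCoeff a b c m + (a - c + 1) * hyperCoeff a b c (m + 1)
        - a * hyperCoeff (a + 1) b c (m + 1) + a * hyperCoeff (a + 1) b c m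
      = -(c - 1) * hyperCoeff (a - 1) b (c - 1) (m + 1) := by
  have hcm : c + m ≠ 0 := by positivity
  have hc1 : c - 1 ≠ 0 := by linarith
  rw [mul_hyperCoeff_add_one, mul_hyperCoeff_add_one, hyperCoeff_sub_one_sub_one_succ,
    hyperCoeff_succ]
  push_cast
  field_simp
  ring

theorem hyperF_contiguous (a b c : ℝ) (hc : 1 < c) {x : ℝ} (hx : |x| < 1) :
    (x * (b - a) + a - c + 1) * hyperF a b c x - (1 - x) * a * hyperF (a + 1) b c x
      = -(c - 1) * hyperF (a - 1) b (c - 1) x := by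
  have hlhs := ((((hasSum_hyperCoeff_mul_pow_succ a b c hx).mul_left (b - a)).add
    ((hasSum_hyperCoeff_succ_mul_pow_succ a b c hx).mul_left (a - c + 1))).sub
    ((hasSum_hyperCoeff_succ_mul_pow_succ (a + 1) b c hx).mul_left a)).add
    ((hasSum_hyperCoeff_mul_pow_succ (a + 1) b c hx).mul_left a)
  have hrhs := (hasSum_hyperCoeff_succ_mul_pow_succ (a - 1) b (c - 1) hx).mul_left (-(c - 1))
  have hsum := (hlhs.congr_fun fun m => by
    linear_combination -x ^ (m + 1) * hyperCoeff_contiguous a b c hc m).unique hrhs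
  linear_combination hsum

theorem hypergeometric_contiguous (s : ℝ) (n k : ℤ) (hnk : k < n)
    (x : ℝ) (hx0 : 0 < x) (hx1 : x < 1) :
    (x * ((k : ℝ) + (n : ℝ)) + s - (n : ℝ)) *
        hyperF (s - (k : ℝ)) (s + (n : ℝ)) (1 - (k : ℝ) + (n : ℝ)) x -
      (1 - x) * (s - (k : ℝ)) *
        hyperF (s - (k : ℝ) + 1) (s + (n : ℝ)) (1 - (k : ℝ) + (n : ℝ)) x
      = -((n : ℝ) - (k : ℝ)) *
          hyperF (s - (k : ℝ) - 1) (s + (n : ℝ)) ((n : ℝ) - (k : ℝ)) x := by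
  have hc : (1 : ℝ) < 1 - k + n := by
    have : (k : ℝ) < n := by exact_mod_cast hnk
    linarith
  have h := hyperF_contiguous (s - k) (s + n) (1 - k + n) hc (abs_lt.mpr ⟨by linarith, hx1⟩)
  rw [show (1 : ℝ) - k + n - 1 = n - k by ring] at h
  linear_combination h
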